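/- If I ⊆ [0,1] and J ⊆ ℝ satisfy the DCC and t ≥ 0, then the set {a + t·b : a ∈ I, b ∈ J, b ≥ 0} satisfies the DCC. More generally, if (t_i) is a nondecreasing sequence of nonnegative reals and a_i ∈ I, b_i ∈ J with b_i ≥ 0, then the sequence (a_i + t_i·b_i) has a nondecreasing subsequence whose entries a, b, t can be taken monotone. -/

import Mathlib

/-! The DCC is partial well-orderedness of `S ⊆ ℝ`. Both sets `I` and `J` therefore yield a common
subsequence along which `a` and `b` are monotone, and `a + t * b` is then monotone as a sum of a
monotone sequence and a product of nonnegative monotone sequences. For fixed `t ≥ 0` the map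
`(a, b) ↦ a + t * b` is monotone, so it carries the partially well-ordered set `I ×ˢ J` to a
partially well-ordered set. -/

/-- `S` satisfies the DCC: every nonincreasing sequence in `S` is eventually constant. -/
def SatisfiesDCC (S : Set ℝ) : Prop :=
  ∀ f : ℕ → ℝ, (∀ i, f i ∈ S) → Antitone f → ∃ N, ∀ n, N ≤ n → f n = f N

namespace SatisfiesDCC

theorem isPWO {S : Set ℝ} (h : SatisfiesDCC S) : S.IsPWO := by
  refine Set.IsWF.isPWO (Set.isWF_iff_no_descending_seq.2 fun f hf hmem => ?_)
  obtain ⟨N, hN⟩ := h f hmem hf.antitone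
  exact (hf (Nat.lt_succ_self N)).ne (hN (N + 1) N.le_succ)

theorem of_isPWO {S : Set ℝ} (h : S.IsPWO) : SatisfiesDCC S := by
  intro f hfS hf
  obtain ⟨g, hg⟩ := h.exists_monotone_subseq hfS
  have hconst : ∀ k, f (g k) = f (g 0) := fun k =>
    le_antisymm (hf (g.monotone k.zero_le)) (hg k.zero_le)
  refine ⟨g 0, fun n hn => le_antisymm (hf hn) ?_⟩
  calc f (g 0) = f (g n) := (hconst n).symm
    _ ≤ f n := hf (g.strictMono.le_apply)

end SatisfiesDCC

theorem satisfiesDCC_iff_isPWO {S : Set ℝ} : SatisfiesDCC S ↔ S.IsPWO :=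
  ⟨SatisfiesDCC.isPWO, SatisfiesDCC.of_isPWO⟩

theorem monotone_add_mul_right {t : ℝ} (ht : 0 ≤ t) :
    Monotone fun p : ℝ × ℝ => p.1 + t * p.2 :=
  fun _ _ h => add_le_add h.1 (mul_le_mul_of_nonneg_left h.2 ht)

theorem dcc_sum_scaled_general (I J : Set ℝ)
    (hJ : J ⊆ {x : ℝ | 0 ≤ x}) (hIdcc : SatisfiesDCC I) (hJdcc : SatisfiesDCC J) :
    (∀ t : ℝ, 0 ≤ t →
      SatisfiesDCC {x : ℝ | ∃ a ∈ I, ∃ b ∈ J, x = a + t * b}) ∧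
    (∀ (t a b : ℕ → ℝ), Monotone t → (∀ i, 0 ≤ t i) →
      (∀ i, a i ∈ I) → (∀ i, b i ∈ J) →
      ∃ φ : ℕ → ℕ, StrictMono φ ∧ Monotone (a ∘ φ) ∧ Monotone (b ∘ φ) ∧
        Monotone (t ∘ φ) ∧ Monotone (fun k => a (φ k) + t (φ k) * b (φ k))) := by
  have hIJ : (I ×ˢ J).IsPWO := hIdcc.isPWO.prod hJdcc.isPWO
  refine ⟨fun t ht => ?_, fun t a b ht ht₀ ha hb => ?_⟩
  · have himage : {x : ℝ | ∃ a ∈ I, ∃ b ∈ J, x = a + t * b} =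
        (fun p : ℝ × ℝ => p.1 + t * p.2) '' I ×ˢ J := by
      ext x
      simp [eq_comm, and_assoc]
    rw [himage, satisfiesDCC_iff_isPWO]
    exact hIJ.image_of_monotone (monotone_add_mul_right ht)
  · obtain ⟨g, hg⟩ := hIJ.exists_monotone_subseq (f := fun i => (a i, b i)) fun i => ⟨ha i, hb i⟩
    have hag : Monotone (a ∘ g) := monotone_fst.comp hg
    have hbg : Monotone (b ∘ g) := monotone_snd.comp hg
    have htg : Monotone (t ∘ g) := ht.comp g.monotone
    exact ⟨g, g.strictMono, hag, hbg, htg,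
      hag.add (htg.mul hbg (fun _ => ht₀ _) fun _ => hJ (hb _))⟩

/-- If `I ⊆ [0,1]` and `J ⊆ ℝ≥0` satisfy the DCC, then for fixed `t ≥ 0` the set
`{a + t·b : a ∈ I, b ∈ J}` satisfies the DCC; moreover, for any nondecreasing
nonnegative sequence `(t i)` and any `a i ∈ I`, `b i ∈ J`, there is a subsequence
along which `a`, `b`, `t` and `a + t·b` are all monotone (nondecreasing). -/
theorem dcc_sum_scaled (I J : Set ℝ) (hI : I ⊆ Set.Icc 0 1)
    (hJ : J ⊆ {x : ℝ | 0 ≤ x}) (hIdcc : SatisfiesDCC I) (hJdcc : SatisfiesDCC J) :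
    (∀ t : ℝ, 0 ≤ t →
      SatisfiesDCC {x : ℝ | ∃ a ∈ I, ∃ b ∈ J, x = a + t * b}) ∧
    (∀ (t a b : ℕ → ℝ), Monotone t → (∀ i, 0 ≤ t i) →
      (∀ i, a i ∈ I) → (∀ i, b i ∈ J) →
      ∃ φ : ℕ → ℕ, StrictMono φ ∧ Monotone (a ∘ φ) ∧ Monotone (b ∘ φ) ∧
        Monotone (t ∘ φ) ∧ Monotone (fun k => a (φ k) + t (φ k) * b (φ k))) :=
  dcc_sum_scaled_general I J hJ hIdcc hJdcc
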